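/- arXiv:1705.02600 — 2 statements merged into one kernel-verified Lean document; each statement's English description precedes it below -/
import Mathlib

section
/- Let R be a semi-branching reliable computed network bisimulation on the states of a CLTS and suppose t₁ R t₂. Then: (i) if t₁ ⇒ t₁' then there exists a state t₂' with t₂ ⇒ t₂' and t₁' R t₂'; and (ii) if t₂ ⇒ t₂' then there exists a state t₁' with t₁ ⇒ t₁' and t₁' R t₂'. -/
namespace RRBPT

/-- Extended addresses: `none` plays the role of the unknown address `?`,
and `some ℓ` is the known address `ℓ ∈ Loc`. -/
abbrev Addr (Loc : Type*) := Option Loc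

/-- A network constraint: a set of triples `(ℓ, ℓ', b)` where `b = true` encodes
the connectivity pair `ℓ⇝ℓ'` and `b = false` the disconnectivity pair `ℓ⇝̸ℓ'`. -/
abbrev NC (Loc : Type*) := Set (Addr Loc × Addr Loc × Bool)

variable {S Loc Msg IAct : Type*}

/-- A network constraint is well-formed when it contains no pair of the form
`ℓ⇝ℓ'` together with `ℓ⇝̸ℓ'`. -/
def WellFormed (C : NC Loc) : Prop :=
  ∀ ℓ ℓ' : Addr Loc, ¬((ℓ, ℓ', true) ∈ C ∧ (ℓ, ℓ', false) ∈ C)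

/-- Substituting the unknown address `?` by `ℓ` in an address. -/
def substAddr (ℓ : Loc) (a : Addr Loc) : Addr Loc := some (a.getD ℓ)

/-- `C[ℓ/?]`: replace every occurrence of the unknown address by `ℓ`. -/
def ncSubst (C : NC Loc) (ℓ : Loc) : NC Loc :=
  (fun p => (substAddr ℓ p.1, substAddr ℓ p.2.1, p.2.2)) '' C

/-- The order `≼` on network constraints: `C₁ ≼ C₂` iff `C₂ ⊆ C₁` or
`C₂[ℓ/?] ⊆ C₁` for some `ℓ ∈ Loc`. -/
def Preceq (C₁ C₂ : NC Loc) : Prop :=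
  C₂ ⊆ C₁ ∨ ∃ ℓ : Loc, ncSubst C₂ ℓ ⊆ C₁

/-- A topology over `Loc`. -/
abbrev Topology (Loc : Type*) := Loc → Set Loc

/-- `C_Γ(γ)`: all one-hop (dis)connectivity information of the topology `γ`. -/
def CGamma (γ : Topology Loc) : NC Loc :=
  {p | ∃ ℓ ℓ' : Loc,
    (p = (some ℓ, some ℓ', true) ∧ ℓ' ∈ γ ℓ) ∨
    (p = (some ℓ, some ℓ', false) ∧ ℓ' ∉ γ ℓ)}

/-- `Γ(C)`: the set of topologies satisfying the network constraint `C`. -/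
def GammaOf (C : NC Loc) : Set (Topology Loc) := {γ | Preceq (CGamma γ) C}

/-- A nonempty list of network constraints `C₁, …, Cₖ` constitutes a
partitioning of `C`: the `Γ(Cᵢ)` are pairwise disjoint and their union is `Γ(C)`. -/
def Partitioning (Cs : List (NC Loc)) (C : NC Loc) : Prop :=
  Cs ≠ [] ∧
  Cs.Pairwise (fun C₁ C₂ => GammaOf C₁ ∩ GammaOf C₂ = ∅) ∧
  (⋃ D ∈ Cs, GammaOf D) = GammaOf C

/-- Actions of a CLTS: network send, network receive, internal, and silent `τ`. -/
inductive Act (Loc Msg IAct : Type*) where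
  | nsnd : Msg → Addr Loc → Act Loc Msg IAct
  | nrcv : Msg → Act Loc Msg IAct
  | internal : IAct → Act Loc Msg IAct
  | tau : Act Loc Msg IAct

/-- `Weak Tr t t'` (written `t ⇒ t'`): reflexive–transitive closure of τ-steps. -/
inductive Weak (Tr : S → NC Loc × Act Loc Msg IAct → S → Prop) : S → S → Prop
  | refl (t : S) : Weak Tr t t
  | step {t s t' : S} (C : NC Loc) : Tr t (C, Act.tau) s → Weak Tr s t' → Weak Tr t t'

/-- `TrB Tr t C η D t'` is the transition `t →⟨(C,η)⟩ t'` with realized network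
constraint `D = ⟨C⟩`: either `t →(C,η) t'` (and `D = C`), or `η = nsnd(m,?)` and
`t →(C[ℓ/?], nsnd(m,ℓ)) t'` for some `ℓ ∈ Loc` (and `D = C[ℓ/?]`). -/
def TrB (Tr : S → NC Loc × Act Loc Msg IAct → S → Prop)
    (t : S) (C : NC Loc) (η : Act Loc Msg IAct) (D : NC Loc) (t' : S) : Prop :=
  (Tr t (C, η) t' ∧ D = C) ∨
  ∃ (m : Msg) (ℓ : Loc), η = Act.nsnd m none ∧ D = ncSubst C ℓ ∧
    Tr t (D, Act.nsnd m (some ℓ)) t'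

/-- The matching condition common to the (semi-)branching simulations: there are
`k > 0` states `s₁'', …, sₖ''` and `s₁', …, sₖ'` such that for all `i ≤ k`,
`t₂ ⇒ sᵢ'' →⟨(Cᵢ,η)⟩ sᵢ'` with `t₁ R sᵢ''` and `t₁' R sᵢ'`, and
`⟨C₁⟩, …, ⟨Cₖ⟩` constitute a partitioning of `C`. -/
def Match (Tr : S → NC Loc × Act Loc Msg IAct → S → Prop) (R : S → S → Prop)
    (t₁ t₁' t₂ : S) (C : NC Loc) (η : Act Loc Msg IAct) : Prop :=
  ∃ L : List (NC Loc × NC Loc × S × S), L ≠ [] ∧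
    (∀ e ∈ L, Weak Tr t₂ e.2.2.1 ∧ TrB Tr e.2.2.1 e.1 η e.2.1 e.2.2.2 ∧
      R t₁ e.2.2.1 ∧ R t₁' e.2.2.2) ∧
    Partitioning (L.map (fun e => e.2.1)) C

/-- Semi-branching reliable computed network simulation. -/
def IsSemiBranchingSim (Tr : S → NC Loc × Act Loc Msg IAct → S → Prop)
    (R : S → S → Prop) : Prop :=
  ∀ ⦃t₁ t₂ t₁' : S⦄ ⦃C : NC Loc⦄ ⦃η : Act Loc Msg IAct⦄,
    R t₁ t₂ → Tr t₁ (C, η) t₁' →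
      (η = Act.tau ∧ ∃ t₂', Weak Tr t₂ t₂' ∧ R t₁ t₂' ∧ R t₁' t₂') ∨
      Match Tr R t₁ t₁' t₂ C η

/-- Semi-branching reliable computed network bisimulation. -/
def IsSemiBranchingBisim (Tr : S → NC Loc × Act Loc Msg IAct → S → Prop)
    (R : S → S → Prop) : Prop :=
  IsSemiBranchingSim Tr R ∧ IsSemiBranchingSim Tr (fun a b => R b a)

/-- Branching reliable computed network simulation. -/
def IsBranchingSim (Tr : S → NC Loc × Act Loc Msg IAct → S → Prop)
    (R : S → S → Prop) : Prop :=
  ∀ ⦃t₁ t₂ t₁' : S⦄ ⦃C : NC Loc⦄ ⦃η : Act Loc Msg IAct⦄,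
    R t₁ t₂ → Tr t₁ (C, η) t₁' →
      (η = Act.tau ∧ R t₁' t₂) ∨
      Match Tr R t₁ t₁' t₂ C η

/-- Branching reliable computed network bisimulation. -/
def IsBranchingBisim (Tr : S → NC Loc × Act Loc Msg IAct → S → Prop)
    (R : S → S → Prop) : Prop :=
  IsBranchingSim Tr R ∧ IsBranchingSim Tr (fun a b => R b a)

/-- Semi-branching reliable computed network bisimilarity: `t₁` and `t₂` are
related by some semi-branching reliable computed network bisimulation.  This is
also the largest semi-branching reliable computed network bisimulation (the
union of all of them). -/
def SemiBisimilar (Tr : S → NC Loc × Act Loc Msg IAct → S → Prop)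
    (t₁ t₂ : S) : Prop :=
  ∃ R, IsSemiBranchingBisim Tr R ∧ R t₁ t₂

/-- Branching reliable computed network bisimilarity `≃_br`. -/
def BrBisimilar (Tr : S → NC Loc × Act Loc Msg IAct → S → Prop)
    (t₁ t₂ : S) : Prop :=
  ∃ R, IsBranchingBisim Tr R ∧ R t₁ t₂

/-- Rooted branching reliable computed network bisimilarity `≃_rbr`. -/
def RootedBrBisimilar (Tr : S → NC Loc × Act Loc Msg IAct → S → Prop)
    (t₁ t₂ : S) : Prop :=
  (∀ (C : NC Loc) (η : Act Loc Msg IAct) (t₁' : S), Tr t₁ (C, η) t₁' →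
    ∃ (D : NC Loc) (t₂' : S), TrB Tr t₂ C η D t₂' ∧ BrBisimilar Tr t₁' t₂') ∧
  (∀ (C : NC Loc) (η : Act Loc Msg IAct) (t₂' : S), Tr t₂ (C, η) t₂' →
    ∃ (D : NC Loc) (t₁' : S), TrB Tr t₁ C η D t₁' ∧ BrBisimilar Tr t₁' t₂')

theorem Weak.trans {Tr : S → NC Loc × Act Loc Msg IAct → S → Prop}
    {t s u : S} (h₁ : Weak Tr t s) (h₂ : Weak Tr s u) : Weak Tr t u := by
  induction h₁ with
  | refl => exact h₂
  | step C h _ ih => exact Weak.step C h (ih h₂)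

theorem tau_transfer {Tr : S → NC Loc × Act Loc Msg IAct → S → Prop}
    {R : S → S → Prop} (hsim : IsSemiBranchingSim Tr R)
    {t₁ t₂ t₁' : S} {C : NC Loc} (h : R t₁ t₂) (hstep : Tr t₁ (C, Act.tau) t₁') :
    ∃ t₂', Weak Tr t₂ t₂' ∧ R t₁' t₂' := by
  rcases hsim h hstep with ⟨_, t₂', hw, _, hr⟩ | ⟨L, hL, hall, _⟩
  · exact ⟨t₂', hw, hr⟩
  · rcases List.exists_mem_of_ne_nil L hL with ⟨e, he⟩
    rcases hall e he with ⟨hw, htrb, _, hr'⟩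
    rcases htrb with ⟨htr, _⟩ | ⟨m, ℓ, heq, _⟩
    · exact ⟨e.2.2.2, hw.trans (Weak.step _ htr (Weak.refl _)), hr'⟩
    · exact absurd heq (by simp)

/-- if `R` is a semi-branching reliable computed network bisimulation
and `t₁ R t₂`, then (i) `t₁ ⇒ t₁'` implies `t₂ ⇒ t₂'` with `t₁' R t₂'` for some
`t₂'`, and (ii) `t₂ ⇒ t₂'` implies `t₁ ⇒ t₁'` with `t₁' R t₂'` for some `t₁'`. -/
theorem weak_transfer_of_semiBranchingBisim
    {S Loc Msg IAct : Type*}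
    (Tr : S → NC Loc × Act Loc Msg IAct → S → Prop)
    (R : S → S → Prop) (hR : IsSemiBranchingBisim Tr R)
    {t₁ t₂ : S} (h : R t₁ t₂) :
    (∀ t₁', Weak Tr t₁ t₁' → ∃ t₂', Weak Tr t₂ t₂' ∧ R t₁' t₂') ∧
    (∀ t₂', Weak Tr t₂ t₂' → ∃ t₁', Weak Tr t₁ t₁' ∧ R t₁' t₂') := by
  constructor
  · intro t₁' hw
    induction hw generalizing t₂ with
    | refl t => exact ⟨t₂, Weak.refl t₂, h⟩
    | step C hstep _ ih =>
      obtain ⟨u, hwu, hru⟩ := tau_transfer hR.1 h hstep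
      obtain ⟨t₂', hw', hr'⟩ := ih hru
      exact ⟨t₂', hwu.trans hw', hr'⟩
  · intro t₂' hw
    induction hw generalizing t₁ with
    | refl t => exact ⟨t₁, Weak.refl t₁, h⟩
    | step C hstep _ ih =>
      obtain ⟨u, hwu, hru⟩ := tau_transfer hR.2 h hstep
      obtain ⟨t₁', hw', hr'⟩ := ih hru
      exact ⟨t₁', hwu.trans hw', hr'⟩

end RRBPT
end

section
/- Let C be a well-formed network constraint and let ℓ, ℓ' ∈ Loc be (known) network addresses (i.e., neither equals the unknown address ?) such that neither ℓ⇝ℓ' nor ℓ⇝̸ℓ' belongs to C. Then the two network constraints C ∪ {ℓ⇝ℓ'} and C ∪ {ℓ⇝̸ℓ'} constitute a partitioning of C. -/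
namespace RRBPT

variable {S Loc Msg IAct : Type*}

lemma ncSubst_insert_some {Loc : Type*} (C : NC Loc) (a b : Loc) (t : Bool) (ℓ₀ : Loc) :
    ncSubst (insert ((some a : Addr Loc), (some b : Addr Loc), t) C) ℓ₀ =
      insert ((some a : Addr Loc), (some b : Addr Loc), t) (ncSubst C ℓ₀) := by
  unfold ncSubst
  rw [Set.image_insert_eq]
  rfl

lemma mem_CGamma_iff {Loc : Type*} (γ : Topology Loc) (a b : Loc) (t : Bool) :
    ((some a : Addr Loc), (some b : Addr Loc), t) ∈ CGamma γ ↔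
      (if t then b ∈ γ a else b ∉ γ a) := by
  constructor
  · rintro ⟨x, y, ⟨heq, hm⟩ | ⟨heq, hm⟩⟩ <;>
      · simp only [Prod.mk.injEq, Option.some.injEq] at heq
        obtain ⟨hx, hy, ht⟩ := heq
        subst hx; subst hy; subst ht; simpa using hm
  · intro h
    cases t with
    | true => exact ⟨a, b, Or.inl ⟨rfl, by simpa using h⟩⟩
    | false => exact ⟨a, b, Or.inr ⟨rfl, by simpa using h⟩⟩

lemma mem_GammaOf_insert {Loc : Type*} (C : NC Loc) (a b : Loc) (t : Bool)
    (γ : Topology Loc) :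
    γ ∈ GammaOf (insert ((some a : Addr Loc), (some b : Addr Loc), t) C) ↔
      ((some a : Addr Loc), (some b : Addr Loc), t) ∈ CGamma γ ∧ γ ∈ GammaOf C := by
  constructor
  · rintro (h | ⟨ℓ₀, h⟩)
    · exact ⟨h (Set.mem_insert _ _), Or.inl fun x hx => h (Set.mem_insert_of_mem _ hx)⟩
    · rw [ncSubst_insert_some] at h
      exact ⟨h (Set.mem_insert _ _),
        Or.inr ⟨ℓ₀, fun x hx => h (Set.mem_insert_of_mem _ hx)⟩⟩
  · rintro ⟨hp, h | ⟨ℓ₀, h⟩⟩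
    · exact Or.inl (Set.insert_subset hp h)
    · exact Or.inr ⟨ℓ₀, by rw [ncSubst_insert_some]; exact Set.insert_subset hp h⟩

/-- for a well-formed network constraint `C` and known addresses
`ℓ, ℓ'` with neither `ℓ⇝ℓ'` nor `ℓ⇝̸ℓ'` in `C`, the constraints `C ∪ {ℓ⇝ℓ'}`
and `C ∪ {ℓ⇝̸ℓ'}` constitute a partitioning of `C`. -/
theorem partitioning_insert_pair
    {Loc : Type*} (C : NC Loc) (hC : WellFormed C) (ℓ ℓ' : Loc)
    (h₁ : ((some ℓ : Addr Loc), (some ℓ' : Addr Loc), true) ∉ C)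
    (h₂ : ((some ℓ : Addr Loc), (some ℓ' : Addr Loc), false) ∉ C) :
    Partitioning
      [insert ((some ℓ : Addr Loc), (some ℓ' : Addr Loc), true) C,
       insert ((some ℓ : Addr Loc), (some ℓ' : Addr Loc), false) C] C := by
  refine ⟨by simp, ?_, ?_⟩
  · refine List.pairwise_cons.mpr ⟨?_, by simp⟩
    intro D hD
    simp only [List.mem_singleton] at hD
    subst hD
    ext γ
    simp only [Set.mem_inter_iff, Set.mem_empty_iff_false, iff_false, not_and]
    intro hγ1 hγ2
    have h1 := ((mem_GammaOf_insert C ℓ ℓ' true γ).mp hγ1).1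
    have h2 := ((mem_GammaOf_insert C ℓ ℓ' false γ).mp hγ2).1
    rw [mem_CGamma_iff] at h1 h2
    simp at h1 h2
    exact h2 h1
  · ext γ
    simp only [List.mem_cons, List.mem_singleton, Set.mem_iUnion, exists_prop,
      List.not_mem_nil, or_false]
    constructor
    · rintro ⟨D, hD | hD, hγ⟩ <;> subst hD <;>
        exact ((mem_GammaOf_insert C ℓ ℓ' _ γ).mp hγ).2
    · intro hγ
      by_cases hmem : ℓ' ∈ γ ℓ
      · exact ⟨_, Or.inl rfl, (mem_GammaOf_insert C ℓ ℓ' true γ).mpr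
          ⟨(mem_CGamma_iff γ ℓ ℓ' true).mpr (by simpa using hmem), hγ⟩⟩
      · exact ⟨_, Or.inr rfl, (mem_GammaOf_insert C ℓ ℓ' false γ).mpr
          ⟨(mem_CGamma_iff γ ℓ ℓ' false).mpr (by simpa using hmem), hγ⟩⟩

end RRBPT
end
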